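/- arXiv:math/0604151 — 3 statements merged into one kernel-verified Lean document; each statement's English description precedes it below -/
import Mathlib

section
/- Let G be a totally disconnected locally compact group, let π : G → H be a continuous, open, surjective group homomorphism onto a totally disconnected locally compact group H with compact kernel, let α be a topological automorphism of G preserving ker(π), and let α̂ be the induced automorphism of H. If Ô is a compact open subgroup of H, then O := π⁻¹(Ô) is a compact open subgroup of G and the index [α(O) : α(O) ∩ O] equals the index [α̂(Ô) : α̂(Ô) ∩ Ô]. -/
/-!
A continuous open surjection with compact kernel is a proper map: it is a quotient map, the
saturation of a closed set `F` is the closed set `F * ker π`, and the fibres are cosets of the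
kernel. Hence `O = π⁻¹(Ô)` is compact open. Since `β ∘ π = π ∘ α`, the group `α(O)` is
`π⁻¹(β(Ô))`, and taking preimages under a surjective homomorphism preserves relative indices.
-/

open scoped Pointwise

namespace MonoidHom

variable {G H : Type*} [Group G] [Group H]

theorem preimage_image_eq_mul_ker (f : G →* H) (s : Set G) :
    f ⁻¹' (f '' s) = s * (f.ker : Set G) := by
  ext x
  simp only [Set.mem_preimage, Set.mem_image, Set.mem_mul, SetLike.mem_coe, mem_ker]
  constructor
  · rintro ⟨y, hy, hyx⟩
    exact ⟨y, hy, y⁻¹ * x, by simp [hyx], mul_inv_cancel_left y x⟩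
  · rintro ⟨y, hy, k, hk, rfl⟩
    exact ⟨y, hy, by simp [hk]⟩

variable [TopologicalSpace G] [IsTopologicalGroup G] [TopologicalSpace H]

theorem isClosedMap_of_isCompact_ker {f : G →* H} (hf : Topology.IsQuotientMap f)
    (hker : IsCompact (f.ker : Set G)) : IsClosedMap f := fun s hs => by
  rw [← hf.isClosed_preimage, preimage_image_eq_mul_ker]
  exact hs.mul_right_of_isCompact hker

theorem isProperMap_of_isCompact_ker {f : G →* H} (hf : Topology.IsQuotientMap f)
    (hker : IsCompact (f.ker : Set G)) : IsProperMap f := by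
  refine isProperMap_iff_isClosedMap_and_compact_fibers.2
    ⟨hf.continuous, isClosedMap_of_isCompact_ker hf hker, fun y => ?_⟩
  obtain ⟨g, rfl⟩ := hf.surjective y
  rw [← Set.image_singleton, preimage_image_eq_mul_ker]
  exact isCompact_singleton.mul hker

end MonoidHom

theorem Subgroup.map_comap_eq_comap_map_of_semiconj {G H : Type*} [Group G] [Group H]
    (π : G →* H) (α : G ≃* G) (β : H ≃* H) (hβ : ∀ g, β (π g) = π (α g)) (K : Subgroup H) :
    (K.comap π).map α.toMonoidHom = (K.map β.toMonoidHom).comap π := by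
  have hβsymm : ∀ g, β.symm (π g) = π (α.symm g) := fun g => by
    rw [β.symm_apply_eq, hβ, α.apply_symm_apply]
  ext x
  simp only [map_equiv_eq_comap_symm', mem_comap, MulEquiv.coe_toMonoidHom, hβsymm]

theorem stmt7_general (G H : Type) [Group G] [TopologicalSpace G] [IsTopologicalGroup G]
    [Group H] [TopologicalSpace H]
    (π : G →* H) (hπc : Continuous π) (hπo : IsOpenMap π) (hπs : Function.Surjective π)
    (hker : IsCompact (π.ker : Set G))
    (α : G ≃* G)
    (β : H ≃* H) (hβ : ∀ g : G, β (π g) = π (α g))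
    (O' : Subgroup H) (hO'cp : IsCompact (O' : Set H)) (hO'op : IsOpen (O' : Set H)) :
    IsCompact ((O'.comap π : Subgroup G) : Set G) ∧
    IsOpen ((O'.comap π : Subgroup G) : Set G) ∧
    (O'.comap π).relIndex ((O'.comap π).map α.toMonoidHom) =
      O'.relIndex (O'.map β.toMonoidHom) := by
  have hquot : Topology.IsQuotientMap π := (IsOpenQuotientMap.mk hπs hπc hπo).isQuotientMap
  refine ⟨(π.isProperMap_of_isCompact_ker hquot hker).isCompact_preimage hO'cp,
    hO'op.preimage hπc, ?_⟩
  rw [Subgroup.map_comap_eq_comap_map_of_semiconj π α β hβ, Subgroup.relIndex_comap,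
    Subgroup.map_comap_eq_self_of_surjective hπs]

/-- Let `π : G → H` be a continuous open surjective homomorphism with compact kernel
between totally disconnected locally compact groups, `α` a topological automorphism of `G`
preserving `ker π`, and `β` the induced automorphism of `H`.  If `Ô` is a compact open
subgroup of `H`, then `O = π⁻¹(Ô)` is compact open and `[α(O) : α(O) ∩ O] = [β(Ô) : β(Ô) ∩ Ô]`. -/
theorem stmt7 (G H : Type) [Group G] [TopologicalSpace G] [IsTopologicalGroup G]
    [TotallyDisconnectedSpace G] [LocallyCompactSpace G]
    [Group H] [TopologicalSpace H] [IsTopologicalGroup H]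
    [TotallyDisconnectedSpace H] [LocallyCompactSpace H]
    (π : G →* H) (hπc : Continuous π) (hπo : IsOpenMap π) (hπs : Function.Surjective π)
    (hker : IsCompact (π.ker : Set G))
    (α : G ≃* G) (hαc : Continuous α) (hαc' : Continuous α.symm)
    (hαker : Subgroup.map α.toMonoidHom π.ker = π.ker)
    (β : H ≃* H) (hβ : ∀ g : G, β (π g) = π (α g))
    (O' : Subgroup H) (hO'cp : IsCompact (O' : Set H)) (hO'op : IsOpen (O' : Set H)) :
    IsCompact ((O'.comap π : Subgroup G) : Set G) ∧
    IsOpen ((O'.comap π : Subgroup G) : Set G) ∧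
    (O'.comap π).relIndex ((O'.comap π).map α.toMonoidHom) =
      O'.relIndex (O'.map β.toMonoidHom) :=
  stmt7_general G H π hπc hπo hπs hker α β hβ O' hO'cp hO'op
end

section
/- For every integer n ≥ 2 and every prime p with 2 ≤ p ≤ 2n - 1, there exists a finite connected multigraph X with first Betti number n, all vertices of degree at least 3, and some vertex of degree p + 1. -/
structure Multigraph where
  V : Type
  E : Type
  [fintypeV : Fintype V]
  [fintypeE : Fintype E]
  ends : E → Sym2 V

namespace Multigraph

attribute [instance] fintypeV fintypeE

noncomputable def degree (X : Multigraph) (v : X.V) : ℕ :=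
  haveI := Classical.decEq X.V
  ∑ e : X.E, Sym2.lift ⟨fun a b => (if a = v then 1 else 0) + (if b = v then 1 else 0),
    fun a b => add_comm _ _⟩ (X.ends e)

def Adj (X : Multigraph) (u v : X.V) : Prop := ∃ e : X.E, X.ends e = s(u, v)

def Connected (X : Multigraph) : Prop :=
  Nonempty X.V ∧ ∀ u v : X.V, Relation.ReflTransGen X.Adj u v

def IsSpanningTree (X : Multigraph) (S : Finset X.E) : Prop :=
  (∀ u v : X.V, Relation.ReflTransGen (fun a b => ∃ e ∈ S, X.ends e = s(a, b)) u v) ∧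
  S.card + 1 = Fintype.card X.V

def Isomorphic (X Y : Multigraph) : Prop :=
  ∃ (φ : X.V ≃ Y.V) (ψ : X.E ≃ Y.E), ∀ e, Y.ends (ψ e) = Sym2.map φ (X.ends e)

end Multigraph

open Multigraph

def G1 (n : ℕ) : Multigraph := ⟨Unit, Fin n, fun _ => s((), ())⟩

def G2 (k a b : ℕ) : Multigraph :=
  ⟨Bool, (Fin k ⊕ Fin a) ⊕ Fin b,
    Sum.elim (Sum.elim (fun _ => s(false, true)) (fun _ => s(false, false)))
      (fun _ => s(true, true))⟩

lemma G1_deg (n : ℕ) (v : (G1 n).V) : (G1 n).degree v = 2 * n := by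
  cases v
  simp [degree, G1, Finset.sum_const, two_mul, mul_two]
  erw [Finset.card_univ, Fintype.card_fin, Sym2.lift_mk]
  simp
  omega

lemma G2_deg_false (k a b : ℕ) : (G2 k a b).degree false = k + 2 * a := by
  classical
  simp [degree, G2, Fintype.sum_sum_type, Finset.sum_const, two_mul, mul_two]
  erw [Fintype.sum_sum_type, Fintype.sum_sum_type]
  simp only [Finset.sum_const, Finset.card_univ, smul_eq_mul, Sum.elim_inl, Sum.elim_inr]
  erw [Sym2.lift_mk, Sym2.lift_mk, Sym2.lift_mk, Fintype.card_fin, Fintype.card_fin, Fintype.card_fin]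
  simp
  try ring

lemma G2_deg_true (k a b : ℕ) : (G2 k a b).degree true = k + 2 * b := by
  classical
  simp [degree, G2, Fintype.sum_sum_type, Finset.sum_const, two_mul, mul_two]
  erw [Fintype.sum_sum_type, Fintype.sum_sum_type]
  simp only [Finset.sum_const, Finset.card_univ, smul_eq_mul, Sum.elim_inl, Sum.elim_inr]
  erw [Sym2.lift_mk, Sym2.lift_mk, Sym2.lift_mk, Fintype.card_fin, Fintype.card_fin, Fintype.card_fin]
  simp
  try ring

lemma G2_conn (k a b : ℕ) (hk : 1 ≤ k) : (G2 k a b).Connected := by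
  refine ⟨⟨false⟩, fun u v => ?_⟩
  have hadj : (G2 k a b).Adj false true := ⟨Sum.inl (Sum.inl ⟨0, hk⟩), rfl⟩
  have hadj' : (G2 k a b).Adj true false :=
    ⟨Sum.inl (Sum.inl ⟨0, hk⟩), Sym2.eq_swap⟩
  cases u <;> cases v
  · exact .refl
  · exact .single hadj
  · exact .single hadj'
  · exact .refl

/-- For every `n ≥ 2` and every prime `p` with `2 ≤ p ≤ 2n - 1` there is a finite connected
multigraph with first Betti number `n`, all degrees ≥ 3, and a vertex of degree `p + 1`. -/
theorem stmt11 (n p : ℕ) (hn : 2 ≤ n) (hp : p.Prime) (hp2 : 2 ≤ p) (hpn : p ≤ 2 * n - 1) :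
    ∃ X : Multigraph, X.Connected ∧ (∀ v : X.V, 3 ≤ X.degree v) ∧
      Fintype.card X.E + 1 = n + Fintype.card X.V ∧
      ∃ v : X.V, X.degree v = p + 1 := by
  rcases eq_or_ne p (2 * n - 1) with h | h
  · -- one vertex, n loops
    refine ⟨G1 n, ⟨⟨()⟩, fun u v => by cases u; cases v; exact .refl⟩, ?_, ?_, ⟨(), ?_⟩⟩
    · intro v; rw [G1_deg]; try omega
    · simp [G1]
      erw [Fintype.card_fin, Fintype.card_unit]
    · erw [G1_deg]; try omega
  · rcases eq_or_ne p 2 with h2 | h2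
    · refine ⟨G2 3 0 (n - 2), G2_conn _ _ _ (by omega), ?_, ?_, ⟨false, ?_⟩⟩
      · intro v
        cases v
        · rw [G2_deg_false]; try omega
        · rw [G2_deg_true]; try omega
      · simp only [G2, Fintype.card_sum, Fintype.card_fin, Fintype.card_bool]
        erw [Fintype.card_sum, Fintype.card_sum, Fintype.card_fin, Fintype.card_fin, Fintype.card_fin, Fintype.card_bool]; try omega
      · rw [G2_deg_false]; try omega
    · have hodd : Odd p := hp.odd_of_ne_two h2
      obtain ⟨q, hq⟩ := hodd
      have hqn : q ≤ n - 2 := by omega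
      refine ⟨G2 2 q (n - 1 - q), G2_conn _ _ _ (by omega), ?_, ?_, ⟨false, ?_⟩⟩
      · intro v
        cases v
        · rw [G2_deg_false]; try omega
        · rw [G2_deg_true]; try omega
      · simp only [G2, Fintype.card_sum, Fintype.card_fin, Fintype.card_bool]
        erw [Fintype.card_sum, Fintype.card_sum, Fintype.card_fin, Fintype.card_fin, Fintype.card_fin]; try omega
      · rw [G2_deg_false]; try omega
end

section
/- Let X be a finite connected multigraph with first Betti number n ≥ 2 and all vertex degrees at least 3, and let T be a spanning tree of X. For each of the n edges e of X not in T, let ℓ(e) be 1 plus the distance in T between the two endpoints of e. Then ℓ(e) ≤ 2(n - 1) for every such edge e. -/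
section Aux

open Relation

variable (X : Multigraph)

/-- The one-step adjacency via edges in `F`. -/
def mrel (F : Finset X.E) (a b : X.V) : Prop := ∃ e ∈ F, X.ends e = s(a, b)

lemma mrel_symm (F : Finset X.E) : Symmetric (mrel X F) :=
  fun _ _ ⟨e, he, h⟩ => ⟨e, he, h.trans (Sym2.eq_swap)⟩

/-- Connectivity via edges in `F`. -/
def MR (F : Finset X.E) : X.V → X.V → Prop := ReflTransGen (mrel X F)

lemma MR_symm (F : Finset X.E) : Symmetric (MR X F) :=
  haveI : Std.Symm (mrel X F) := ⟨mrel_symm X F⟩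
  fun x y h => (Std.Symm.symm (r := ReflTransGen (mrel X F)) x y h : _)

def mst (F : Finset X.E) : Setoid X.V :=
  ⟨MR X F, ⟨fun _ => ReflTransGen.refl, fun h => MR_symm X F h, fun h1 h2 => h1.trans h2⟩⟩

lemma sym2_cases {α : Type*} (z : Sym2 α) : ∃ x y, z = s(x, y) :=
  Sym2.ind (fun x y => ⟨x, y, rfl⟩) z

lemma mr_key [DecidableEq X.E] (F : Finset X.E) (e0 : X.E) (u v : X.V) (huv : X.ends e0 = s(u, v))
    {x y : X.V} (h : MR X (insert e0 F) x y) :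
    MR X F x y ∨ (MR X F x u ∧ MR X F v y) ∨ (MR X F x v ∧ MR X F u y) := by
  induction h using ReflTransGen.head_induction_on with
  | refl => exact Or.inl ReflTransGen.refl
  | @head x' z' hxz hrest ih =>
    obtain ⟨e1, he1, hends⟩ := hxz
    rcases Finset.mem_insert.mp he1 with rfl | he1F
    · have : s(u, v) = s(_, _) := huv.symm.trans hends
      rcases Sym2.eq_iff.mp this with ⟨rfl, rfl⟩ | ⟨rfl, rfl⟩
      · -- x = u, z = v
        rcases ih with h1 | ⟨h1, h2⟩ | ⟨h1, h2⟩
        · exact Or.inr (Or.inl ⟨ReflTransGen.refl, h1⟩)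
        · exact Or.inr (Or.inl ⟨ReflTransGen.refl, h2⟩)
        · exact Or.inl h2
      · -- u = z, v = x
        rcases ih with h1 | ⟨h1, h2⟩ | ⟨h1, h2⟩
        · exact Or.inr (Or.inr ⟨ReflTransGen.refl, h1⟩)
        · exact Or.inl h2
        · exact Or.inr (Or.inr ⟨ReflTransGen.refl, h2⟩)
    · have step : MR X F x' _ := ReflTransGen.single ⟨e1, he1F, hends⟩
      rcases ih with h1 | ⟨h1, h2⟩ | ⟨h1, h2⟩
      · exact Or.inl (step.trans h1)
      · exact Or.inr (Or.inl ⟨step.trans h1, h2⟩)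
      · exact Or.inr (Or.inr ⟨step.trans h1, h2⟩)

lemma card_quot_le [DecidableEq X.E] (F : Finset X.E) (e0 : X.E) :
    Nat.card (Quotient (mst X F)) ≤ Nat.card (Quotient (mst X (insert e0 F))) + 1 := by
  obtain ⟨u, v, huv⟩ := sym2_cases (X.ends e0)
  classical
  have mono : ∀ {x y : X.V}, MR X F x y → MR X (insert e0 F) x y := by
    intro x y h
    exact ReflTransGen.mono (r := mrel X F) (p := mrel X (insert e0 F)) (fun a b ⟨e, he, hh⟩ => ⟨e, Finset.mem_insert_of_mem he, hh⟩) _ _ h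
  let φ : Quotient (mst X F) → Quotient (mst X (insert e0 F)) :=
    Quotient.map' id (fun a b h => mono h)
  let ψ : Quotient (mst X F) → (Quotient (mst X (insert e0 F))) ⊕ Unit :=
    fun q => if q = Quotient.mk (mst X F) v then Sum.inr () else Sum.inl (φ q)
  have hψ : Function.Injective ψ := by
    intro q1 q2 h
    by_cases h1 : q1 = Quotient.mk (mst X F) v
    · by_cases h2 : q2 = Quotient.mk (mst X F) v
      · rw [h1, h2]
      · simp only [ψ, if_pos h1, if_neg h2] at h
        exact absurd h (by simp)
    · by_cases h2 : q2 = Quotient.mk (mst X F) v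
      · simp only [ψ, if_neg h1, if_pos h2] at h
        exact absurd h (by simp)
      · simp only [ψ, if_neg h1, if_neg h2, Sum.inl.injEq] at h
        obtain ⟨x, rfl⟩ := Quotient.exists_rep q1
        obtain ⟨y, rfl⟩ := Quotient.exists_rep q2
        have hxy : MR X (insert e0 F) x y := Quotient.eq''.mp h
        rcases mr_key X F e0 u v huv hxy with hk | ⟨hk1, hk2⟩ | ⟨hk1, hk2⟩
        · exact Quotient.sound hk
        · exact absurd (Quotient.sound (MR_symm X F hk2)) h2
        · exact absurd (Quotient.sound hk1 : _ = Quotient.mk (mst X F) v) h1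
  calc Nat.card (Quotient (mst X F))
      ≤ Nat.card ((Quotient (mst X (insert e0 F))) ⊕ Unit) :=
        Nat.card_le_card_of_injective ψ hψ
    _ = Nat.card (Quotient (mst X (insert e0 F))) + 1 := by
        rw [Nat.card_sum]; simp

lemma card_lower (F : Finset X.E) :
    Fintype.card X.V ≤ Nat.card (Quotient (mst X F)) + F.card := by
  classical
  induction F using Finset.induction_on with
  | empty =>
    have hinj : Function.Bijective (Quotient.mk (mst X ∅)) := by
      constructor
      · intro x y h
        have hxy : MR X ∅ x y := Quotient.eq''.mp h
        induction hxy with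
        | refl => rfl
        | tail _ hstep ih =>
          obtain ⟨e, he, _⟩ := hstep
          exact absurd he (Finset.notMem_empty e)
      · exact Quotient.exists_rep
    rw [Finset.card_empty, Nat.add_zero, ← Nat.card_eq_of_bijective _ hinj,
      Nat.card_eq_fintype_card]
  | @insert e0 F he0 ih =>
    calc Fintype.card X.V ≤ Nat.card (Quotient (mst X F)) + F.card := ih
      _ ≤ (Nat.card (Quotient (mst X (insert e0 F))) + 1) + F.card :=
          Nat.add_le_add_right (card_quot_le X F e0) _
      _ = Nat.card (Quotient (mst X (insert e0 F))) + (insert e0 F).card := by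
          rw [Finset.card_insert_of_notMem he0]; ring

lemma conn_lower (F : Finset X.E) (hconnF : ∀ u v : X.V, MR X F u v) :
    Fintype.card X.V ≤ F.card + 1 := by
  have hsub : Subsingleton (Quotient (mst X F)) := by
    constructor
    intro q1 q2
    obtain ⟨x, rfl⟩ := Quotient.exists_rep q1
    obtain ⟨y, rfl⟩ := Quotient.exists_rep q2
    exact Quotient.sound (hconnF x y)
  have h1 : Nat.card (Quotient (mst X F)) ≤ 1 :=
    (Finite.card_le_one_iff_subsingleton).mpr hsub
  have := card_lower X F
  omega

lemma bridge [DecidableEq X.E] (S : Finset X.E) (hconnS : ∀ u v : X.V, MR X S u v)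
    (hcard : S.card + 1 = Fintype.card X.V) (e0 : X.E) (he0 : e0 ∈ S)
    (u v : X.V) (huv : X.ends e0 = s(u, v)) :
    ¬ MR X (S.erase e0) u v := by
  classical
  intro hR
  have conn' : ∀ x y : X.V, MR X (S.erase e0) x y := by
    intro x y
    have h := hconnS x y
    induction h with
    | refl => exact ReflTransGen.refl
    | tail _ hstep ih =>
      obtain ⟨e1, he1, hends⟩ := hstep
      by_cases he : e1 = e0
      · subst he
        have : s(u, v) = s(_, _) := huv.symm.trans hends
        rcases Sym2.eq_iff.mp this with ⟨rfl, rfl⟩ | ⟨rfl, rfl⟩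
        · exact ih.trans hR
        · exact ih.trans (MR_symm X _ hR)
      · exact ih.tail ⟨e1, Finset.mem_erase.mpr ⟨he, he1⟩, hends⟩
  have hlow := conn_lower X (S.erase e0) conn'
  have hcarderase : (S.erase e0).card = S.card - 1 := Finset.card_erase_of_mem he0
  have hpos : 1 ≤ S.card := Finset.card_pos.mpr ⟨e0, he0⟩
  omega

end Aux

/-- Let `X` be a finite connected multigraph with first Betti number `n ≥ 2` and all degrees
≥ 3, `S` a spanning tree, and `e ∉ S` an edge with endpoints `a, b`.  If `d` is the distance
in the spanning tree between `a` and `b` (the length of a reduced path in `S` from `a` to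
`b`), then `1 + d ≤ 2(n - 1)`. -/
theorem stmt14 (X : Multigraph) (n : ℕ) (hn : 2 ≤ n) (hconn : X.Connected)
    (hdeg : ∀ v : X.V, 3 ≤ X.degree v)
    (hbetti : Fintype.card X.E + 1 = n + Fintype.card X.V)
    (S : Finset X.E) (hS : X.IsSpanningTree S)
    (e : X.E) (he : e ∉ S) (a b : X.V) (hab : X.ends e = s(a, b))
    (d : ℕ) (p : Fin (d + 1) → X.V) (c : Fin d → X.E)
    (hc : ∀ i, c i ∈ S)
    (hpa : p 0 = a) (hpb : p (Fin.last d) = b)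
    (hpc : ∀ i : Fin d, X.ends (c i) = s(p i.castSucc, p i.succ))
    (hnb : ∀ i j : Fin d, (i : ℕ) + 1 = (j : ℕ) → c i ≠ c j) :
    1 + d ≤ 2 * (n - 1) := by
  classical
  obtain ⟨hconnS, hcardS⟩ := hS
  have hconnS' : ∀ u v : X.V, MR X S u v := hconnS
  -- helper : p applied to equal-valued Fins
  have pcongr : ∀ (a b : Fin (d+1)), (a : ℕ) = (b : ℕ) → p a = p b :=
    fun a b h => congrArg p (Fin.ext h)
  -- walk segments avoiding a given edge
  have walkseg : ∀ (e0 : X.E) (m i : ℕ) (h : i + m ≤ d),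
      (∀ k (hk : k < m), c ⟨i + k, by omega⟩ ≠ e0) →
      Relation.ReflTransGen (mrel X (S.erase e0)) (p ⟨i, by omega⟩) (p ⟨i + m, by omega⟩) := by
    intro e0 m
    induction m with
    | zero => intro i h _; exact Relation.ReflTransGen.refl
    | succ m ih =>
      intro i h hk
      have hstep : mrel X (S.erase e0) (p ⟨i + m, by omega⟩) (p ⟨i + m + 1, by omega⟩) := by
        refine ⟨c ⟨i + m, by omega⟩, Finset.mem_erase.mpr ⟨hk m (Nat.lt_succ_self m), hc _⟩, ?_⟩
        have := hpc ⟨i + m, by omega⟩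
        simpa [Fin.castSucc_mk, Fin.succ_mk] using this
      exact (ih i (by omega) (fun k hk' => hk k (by omega))).tail hstep
  -- injectivity of c
  have main : ∀ g : ℕ, ∀ i j : Fin d, (i : ℕ) < (j : ℕ) → (j : ℕ) - (i : ℕ) = g →
      c i ≠ c j := by
    intro g
    induction g using Nat.strong_induction_on with
    | _ g IH =>
      intro i j hij hg hcij
      have hbr := bridge X S hconnS' hcardS (c i) (hc i) _ _ (hpc i)
      have seg1' := walkseg (c i) ((j : ℕ) - ((i : ℕ) + 1)) ((i : ℕ) + 1) (by omega)
        (by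
          intro k hk
          have hlt : k + 1 < g := by omega
          exact (IH (k + 1) hlt i ⟨(i : ℕ) + 1 + k, by omega⟩ (by simp; omega)
            (by simp; omega)).symm)
      have seg1 : Relation.ReflTransGen (mrel X (S.erase (c i))) (p i.succ) (p j.castSucc) := by
        have e1 : p (⟨(i : ℕ) + 1, by omega⟩ : Fin (d+1)) = p i.succ :=
          pcongr _ _ (by simp)
        have e2 : p (⟨(i : ℕ) + 1 + ((j : ℕ) - ((i : ℕ) + 1)), by omega⟩ : Fin (d+1))
            = p j.castSucc := pcongr _ _ (by simp; omega)
        rwa [e1, e2] at seg1'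
      have hends : s(p i.castSucc, p i.succ) = s(p j.castSucc, p j.succ) :=
        (hpc i).symm.trans (hcij ▸ hpc j)
      rcases Sym2.eq_iff.mp hends with ⟨h1, h2⟩ | ⟨h1, h2⟩
      · -- p i.castSucc = p j.castSucc
        exact hbr (MR_symm X _ (h1 ▸ seg1))
      · -- p i.castSucc = p j.succ, p i.succ = p j.castSucc
        by_cases hg1 : g = 1
        · exact hnb i j (by omega) hcij
        · have hg2 : 2 ≤ g := by omega
          have hi1 : (i : ℕ) + 1 < d := by omega
          set i1 : Fin d := ⟨(i : ℕ) + 1, hi1⟩ with hi1def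
          have hbr1 := bridge X S hconnS' hcardS (c i1) (hc i1) _ _ (hpc i1)
          have seg2' := walkseg (c i1) ((j : ℕ) - ((i : ℕ) + 2)) ((i : ℕ) + 2) (by omega)
            (by
              intro k hk
              have hlt : k + 1 < g := by omega
              exact (IH (k + 1) hlt i1 ⟨(i : ℕ) + 2 + k, by omega⟩ (by simp [hi1def]; omega)
                (by simp [hi1def]; omega)).symm)
          have e1 : p (⟨(i : ℕ) + 2, by omega⟩ : Fin (d+1)) = p i1.succ :=
            pcongr _ _ (by simp [hi1def])
          have e2 : p (⟨(i : ℕ) + 2 + ((j : ℕ) - ((i : ℕ) + 2)), by omega⟩ : Fin (d+1))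
              = p j.castSucc := pcongr _ _ (by simp; omega)
          have e3 : p j.castSucc = p i1.castSucc := by
            rw [← h2]
            exact pcongr _ _ (by simp [hi1def])
          rw [e1, e2, e3] at seg2'
          exact hbr1 (MR_symm X _ seg2')
  have cinj : Function.Injective c := by
    intro i j h
    by_contra hne
    rcases lt_or_gt_of_ne (fun hv : (i : ℕ) = (j : ℕ) => hne (Fin.ext hv)) with hlt | hlt
    · exact main _ i j hlt rfl h
    · exact main _ j i hlt rfl h.symm
  -- d ≤ S.card
  have hdS : d ≤ S.card := by
    have := Finset.card_le_card_of_injOn (s := (Finset.univ : Finset (Fin d))) (t := S) c (fun i _ => hc i) cinj.injOn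
    simpa using this
  -- degree sum
  have hsum : ∑ v : X.V, X.degree v = 2 * Fintype.card X.E := by
    unfold Multigraph.degree
    rw [Finset.sum_comm]
    have : ∀ e' : X.E, (∑ v : X.V,
        Sym2.lift ⟨fun a b => (if a = v then 1 else 0) + (if b = v then 1 else 0),
          fun a b => add_comm _ _⟩ (X.ends e')) = 2 := by
      intro e'
      obtain ⟨x, y, hxy⟩ := sym2_cases (X.ends e')
      rw [hxy]
      simp only [Sym2.lift_mk]
      rw [Finset.sum_add_distrib, Finset.sum_ite_eq, Finset.sum_ite_eq]
      simp
    rw [Finset.sum_congr rfl (fun e' _ => this e')]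
    simp [Finset.card_univ, mul_comm]
  have hdeg3 : 3 * Fintype.card X.V ≤ ∑ v : X.V, X.degree v := by
    have := Finset.card_nsmul_le_sum Finset.univ X.degree 3 (fun v _ => hdeg v)
    simpa [Finset.card_univ, mul_comm] using this
  omega
end
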